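/- A Banach space X is Gurarii if and only if for every ε > 0, every pair of finite-dimensional spaces E ⊆ F, and every strict ε-isometric embedding f : E → X, there exists an ε-isometric embedding g : F → X with ‖g|_E − f‖ ≤ ε. -/

import Mathlib

/-!
If `X` is Gurarii and `f : E → X` is a strict `(1 + ε)`-isometry, compactness of the unit sphere
of `E` gives `K < 1 + ε` such that `f` is a `K`-isometry. Renorming `F` by
`‖y‖' = inf_{x ∈ E} (‖f x‖ + K ‖y - x‖)` makes `f` an isometry on `E`, while `‖·‖'` stays
`K`-equivalent to `‖·‖`; an extension of `f` with distortion `(1 + ε) / K` for the new norm is then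
an exact extension with distortion `1 + ε` for the old one.

Conversely, for an isometry `f`, an approximate extension `g₁` with `‖g₁|_E - f‖ ≤ δ` is corrected
to the exact extension `g₁ + (f - g₁|_E) ∘ P`, where `P` is a projection onto `E`. This moves `g₁`
by at most `δ ‖P‖`, which is harmless once `δ` is small compared with `ε` and `‖P‖`.
-/

universe u v

/-- A Banach space `G` is *Gurarii* if for every pair of finite-dimensional spaces
`E ⊆ F`, every isometric embedding `f : E → G` and every `ε > 0`, there is an
`ε`-isometric embedding `g : F → G` extending `f`. -/
def IsGurarii (G : Type v) [NormedAddCommGroup G] [NormedSpace ℝ G] : Prop :=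
  ∀ (F₀ : Type u) [NormedAddCommGroup F₀] [NormedSpace ℝ F₀] [FiniteDimensional ℝ F₀],
    ∀ (E₀ : Subspace ℝ F₀) (f : E₀ →ₗᵢ[ℝ] G) (ε : ℝ), 0 < ε →
      ∃ g : F₀ →L[ℝ] G, (∀ x : E₀, g (x : F₀) = f x) ∧
        ∀ x : F₀, (1 + ε)⁻¹ * ‖x‖ ≤ ‖g x‖ ∧ ‖g x‖ ≤ (1 + ε) * ‖x‖

open Metric

def IsAlmostIsometry {E X : Type*} [Norm E] [Norm X] (K : ℝ) (f : E → X) : Prop :=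
  ∀ x, K⁻¹ * ‖x‖ ≤ ‖f x‖ ∧ ‖f x‖ ≤ K * ‖x‖

theorem IsAlmostIsometry.comp {X Y Z : Type*} [Norm X] [Norm Y] [Norm Z] {g : Y → Z} {h : X → Y}
    {K L : ℝ} (hg : IsAlmostIsometry K g) (hh : IsAlmostIsometry L h) (hK : 0 ≤ K) :
    IsAlmostIsometry (K * L) (g ∘ h) := fun x =>
  ⟨calc (K * L)⁻¹ * ‖x‖ = K⁻¹ * (L⁻¹ * ‖x‖) := by rw [mul_inv, mul_assoc]
      _ ≤ K⁻¹ * ‖h x‖ := mul_le_mul_of_nonneg_left (hh x).1 (inv_nonneg.2 hK)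
      _ ≤ ‖g (h x)‖ := (hg (h x)).1,
    calc ‖g (h x)‖ ≤ K * ‖h x‖ := (hg (h x)).2
      _ ≤ K * (L * ‖x‖) := mul_le_mul_of_nonneg_left (hh x).2 hK
      _ = K * L * ‖x‖ := (mul_assoc _ _ _).symm⟩

theorem IsAlmostIsometry.add {F X : Type*} [SeminormedAddGroup F] [SeminormedAddGroup X]
    {g h : F → X} {K L η : ℝ} (hg : IsAlmostIsometry K g) (hh : ∀ y, ‖h y‖ ≤ η * ‖y‖)
    (hlo : L⁻¹ ≤ K⁻¹ - η) (hhi : K + η ≤ L) : IsAlmostIsometry L (g + h) := fun y => by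
  have hy := norm_nonneg y
  have htri := norm_le_add_norm_add (g y) (h y)
  simp only [Pi.add_apply]
  refine ⟨?_, (norm_add_le _ _).trans ?_⟩
  · linarith [(hg y).1, hh y, mul_le_mul_of_nonneg_right hlo hy]
  · linarith [(hg y).2, hh y, mul_le_mul_of_nonneg_right hhi hy]

section Bounds

variable {E X : Type*} [NormedAddCommGroup E] [NormedSpace ℝ E]
  [NormedAddCommGroup X] [NormedSpace ℝ X]

theorem IsAlmostIsometry.of_sphere {f : E →ₗ[ℝ] X} {K : ℝ}
    (hf : ∀ x ∈ sphere (0 : E) 1, K⁻¹ ≤ ‖f x‖ ∧ ‖f x‖ ≤ K) : IsAlmostIsometry K f := by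
  intro x
  rcases eq_or_ne x 0 with rfl | hx
  · simp
  have hx₀ : 0 < ‖x‖ := norm_pos_iff.2 hx
  have hu : ‖x‖⁻¹ • x ∈ sphere (0 : E) 1 := by
    simp [norm_smul, hx₀.ne']
  have hscale : ‖f x‖ = ‖x‖ * ‖f (‖x‖⁻¹ • x)‖ := by
    rw [map_smul, norm_smul, norm_inv, norm_norm, mul_inv_cancel_left₀ hx₀.ne']
  obtain ⟨hlo, hhi⟩ := hf _ hu
  rw [hscale]
  constructor
  · rw [mul_comm]; exact mul_le_mul_of_nonneg_left hlo hx₀.le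
  · rw [mul_comm K]; exact mul_le_mul_of_nonneg_left hhi hx₀.le

theorem exists_isAlmostIsometry_of_strict [FiniteDimensional ℝ E] (f : E →L[ℝ] X) {c : ℝ}
    (hc : 1 < c) (hf : ∀ x : E, x ≠ 0 → c⁻¹ * ‖x‖ < ‖f x‖ ∧ ‖f x‖ < c * ‖x‖) :
    ∃ K, 1 ≤ K ∧ K < c ∧ IsAlmostIsometry K f := by
  rcases (sphere (0 : E) 1).eq_empty_or_nonempty with hempty | hne
  · exact ⟨1, le_rfl, hc, .of_sphere (f := (f : E →ₗ[ℝ] X)) (by simp [hempty])⟩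
  have hf_sphere : ∀ x ∈ sphere (0 : E) 1, c⁻¹ < ‖f x‖ ∧ ‖f x‖ < c := fun x hx => by
    have hx1 : ‖x‖ = 1 := mem_sphere_zero_iff_norm.1 hx
    simpa [hx1] using hf x (ne_of_mem_sphere hx one_ne_zero)
  have hpos : ∀ x ∈ sphere (0 : E) 1, 0 < ‖f x‖ := fun x hx =>
    (inv_pos.2 (by linarith)).trans (hf_sphere x hx).1
  -- `max ‖f x‖ ‖f x‖⁻¹` is the distortion of `f` at the unit vector `x`
  have hcont : ContinuousOn (fun x => max ‖f x‖ ‖f x‖⁻¹) (sphere (0 : E) 1) :=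
    ContinuousOn.sup f.continuous.norm.continuousOn
      (f.continuous.norm.continuousOn.inv₀ fun x hx => (hpos x hx).ne')
  obtain ⟨x₀, hx₀, hmax⟩ := (isCompact_sphere (0 : E) 1).exists_isMaxOn hne hcont
  set K := max 1 (max ‖f x₀‖ ‖f x₀‖⁻¹)
  have hK : ∀ x ∈ sphere (0 : E) 1, max ‖f x‖ ‖f x‖⁻¹ ≤ K := fun x hx =>
    (hmax hx).trans (le_max_right _ _)
  refine ⟨K, le_max_left _ _, max_lt hc (max_lt (hf_sphere x₀ hx₀).2 ?_),
    .of_sphere fun x hx => ⟨?_, (le_max_left _ _).trans (hK x hx)⟩⟩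
  · exact (inv_lt_comm₀ (by linarith) (hpos x₀ hx₀)).1 (hf_sphere x₀ hx₀).1
  · exact inv_le_of_inv_le₀ (hpos x hx) ((le_max_right _ _).trans (hK x hx))

end Bounds

/-- `F` normed by `p`. Only the norm is an instance: the normed structure, which needs `p` to be
definite, is built locally from `Renorm.normedSpaceCore`. -/
def Renorm {F : Type*} [AddCommGroup F] [Module ℝ F] (_p : Seminorm ℝ F) : Type _ := F

namespace Renorm

variable {F : Type*} [AddCommGroup F] [Module ℝ F] (p : Seminorm ℝ F)

instance : AddCommGroup (Renorm p) := ‹AddCommGroup F›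
instance : Module ℝ (Renorm p) := ‹Module ℝ F›
instance : Norm (Renorm p) := ⟨p⟩
instance [FiniteDimensional ℝ F] : FiniteDimensional ℝ (Renorm p) := ‹FiniteDimensional ℝ F›

def equiv : F ≃ₗ[ℝ] Renorm p := LinearEquiv.refl ℝ F

theorem norm_equiv (y : F) : ‖equiv p y‖ = p y := rfl

variable {p} in
theorem normedSpaceCore (hp : ∀ y, p y = 0 → y = 0) :
    NormedSpace.Core ℝ (Renorm p) where
  norm_nonneg := apply_nonneg p
  norm_smul := map_smul_eq_mul p
  norm_triangle := map_add_le_add p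
  norm_eq_zero_iff y := ⟨hp y, fun h => h ▸ map_zero p⟩

end Renorm

section PushoutNorm

variable {F X : Type*} [NormedAddCommGroup F] [NormedSpace ℝ F]
  [NormedAddCommGroup X] [NormedSpace ℝ X] {E : Subspace ℝ F} {f : E →ₗ[ℝ] X} {K : ℝ}

variable (E f K) in
/-- The quotient norm of `X ⊕₁ (F, K‖·‖)` by the graph `{(f x, -x)}`, restricted to `F`. -/
noncomputable def pushoutNorm (y : F) : ℝ :=
  ⨅ x : E, ‖f x‖ + K * ‖y - x‖

theorem pushoutNorm_le (hK : 0 ≤ K) (y : F) (x : E) :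
    pushoutNorm E f K y ≤ ‖f x‖ + K * ‖y - x‖ :=
  ciInf_le ⟨0, by rintro _ ⟨x, rfl⟩; positivity⟩ x

theorem pushoutNorm_nonneg (hK : 0 ≤ K) (y : F) : 0 ≤ pushoutNorm E f K y :=
  le_ciInf fun _ => by positivity

theorem pushoutNorm_le_mul_norm (hK : 0 ≤ K) (y : F) : pushoutNorm E f K y ≤ K * ‖y‖ := by
  simpa using pushoutNorm_le (f := f) hK y 0

theorem pushoutNorm_coe (hK : 0 ≤ K) (hf : ∀ x, ‖f x‖ ≤ K * ‖x‖) (x : E) :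
    pushoutNorm E f K x = ‖f x‖ := by
  refine le_antisymm (by simpa using pushoutNorm_le (f := f) hK x x) (le_ciInf fun x' => ?_)
  calc ‖f x‖ = ‖f x' + f (x - x')‖ := by rw [← map_add, add_sub_cancel]
    _ ≤ ‖f x'‖ + K * ‖x - x'‖ := (norm_add_le _ _).trans (add_le_add_right (hf _) _)
    _ = ‖f x'‖ + K * ‖(x : F) - x'‖ := rfl

theorem inv_mul_norm_le_pushoutNorm (hK : 1 ≤ K) (hf : ∀ x, K⁻¹ * ‖x‖ ≤ ‖f x‖) (y : F) :
    K⁻¹ * ‖y‖ ≤ pushoutNorm E f K y := by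
  refine le_ciInf fun x => ?_
  have hKinv : K⁻¹ ≤ K := (inv_le_one_of_one_le₀ hK).trans hK
  calc K⁻¹ * ‖y‖ ≤ K⁻¹ * ‖(x : F)‖ + K⁻¹ * ‖y - x‖ := by
        rw [← mul_add]
        exact mul_le_mul_of_nonneg_left (norm_le_insert' _ _) (by positivity)
    _ ≤ ‖f x‖ + K * ‖y - x‖ :=
        add_le_add (hf x) (mul_le_mul_of_nonneg_right hKinv (norm_nonneg _))

theorem pushoutNorm_add_le (hK : 0 ≤ K) (y z : F) :
    pushoutNorm E f K (y + z) ≤ pushoutNorm E f K y + pushoutNorm E f K z := by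
  refine le_ciInf_add_ciInf fun x x' => (pushoutNorm_le hK _ (x + x')).trans ?_
  have htri : ‖y + z - ↑(x + x')‖ ≤ ‖y - x‖ + ‖z - x'‖ := by
    rw [Submodule.coe_add, add_sub_add_comm]
    exact norm_add_le _ _
  rw [map_add]
  linarith [norm_add_le (f x) (f x'), mul_le_mul_of_nonneg_left htri hK]

theorem pushoutNorm_smul_le (hK : 0 ≤ K) (c : ℝ) (y : F) :
    pushoutNorm E f K (c • y) ≤ ‖c‖ * pushoutNorm E f K y := by
  rw [pushoutNorm, pushoutNorm, Real.mul_iInf_of_nonneg (norm_nonneg c)]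
  refine le_ciInf fun x => (pushoutNorm_le (f := f) hK _ (c • x)).trans_eq ?_
  rw [map_smul, Submodule.coe_smul, ← smul_sub, norm_smul, norm_smul]
  ring

variable (E f) in
noncomputable def pushoutSeminorm (hK : 0 ≤ K) : Seminorm ℝ F :=
  .ofSMulLE (pushoutNorm E f K)
    (le_antisymm (by simpa using pushoutNorm_le_mul_norm (f := f) hK 0) (pushoutNorm_nonneg hK 0))
    (pushoutNorm_add_le hK) (pushoutNorm_smul_le hK)

end PushoutNorm

theorem IsGurarii.exists_extension {X : Type*} [NormedAddCommGroup X] [NormedSpace ℝ X]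
    (hX : IsGurarii.{u} X) {F : Type u} [NormedAddCommGroup F] [NormedSpace ℝ F]
    [FiniteDimensional ℝ F] {E : Subspace ℝ F} {f : E →ₗ[ℝ] X} {K c : ℝ} (hK : 1 ≤ K)
    (hKc : K < c) (hf : IsAlmostIsometry K f) :
    ∃ g : F →L[ℝ] X, (∀ x : E, g x = f x) ∧ IsAlmostIsometry c g := by
  have hK₀ : 0 < K := zero_lt_one.trans_le hK
  set p := pushoutSeminorm E f hK₀.le
  have hp : IsAlmostIsometry K (Renorm.equiv p) := fun y =>
    ⟨inv_mul_norm_le_pushoutNorm hK (fun x => (hf x).1) y, pushoutNorm_le_mul_norm hK₀.le y⟩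
  have hcore := Renorm.normedSpaceCore (p := p) fun y hy => norm_le_zero_iff.1 <|
    le_of_mul_le_mul_left (by simpa [Renorm.norm_equiv, hy] using (hp y).1) (inv_pos.2 hK₀)
  let _ : NormedAddCommGroup (Renorm p) := .ofCore hcore
  let _ : NormedSpace ℝ (Renorm p) := .ofCore hcore
  let J := Renorm.equiv p
  let E₁ := E.map (J : F →ₗ[ℝ] Renorm p)
  let e : E ≃ₗ[ℝ] E₁ := J.submoduleMap E
  let f₁ : E₁ →ₗᵢ[ℝ] X :=
    ⟨f ∘ₗ e.symm, fun z => (pushoutNorm_coe hK₀.le (fun x => (hf x).2) (e.symm z)).symm⟩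
  obtain ⟨g₁, hg₁f, hg₁⟩ := hX (Renorm p) E₁ f₁ (c / K - 1) (by
    rw [sub_pos, one_lt_div hK₀]; exact hKc)
  refine ⟨LinearMap.toContinuousLinearMap (g₁.toLinearMap ∘ₗ J), fun x => ?_, ?_⟩
  · exact (hg₁f (e x)).trans (congrArg f (e.symm_apply_apply x))
  · have hg₁' : IsAlmostIsometry (c / K) g₁ := by rwa [add_sub_cancel] at hg₁
    simpa [div_mul_cancel₀ c hK₀.ne'] using
      hg₁'.comp hp (div_nonneg (by linarith) hK₀.le)

theorem exists_pos_perturbation_bounds {ε C : ℝ} (hε : 0 < ε) (hC : 0 ≤ C) :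
    ∃ δ > 0, (1 + ε)⁻¹ ≤ (1 + δ)⁻¹ - δ * C ∧ 1 + δ + δ * C ≤ 1 + ε := by
  set δ := ε / ((1 + ε) * (1 + C))
  have hδ : 0 < δ := by positivity
  have hδC : δ + δ * C = 1 - (1 + ε)⁻¹ := by
    simp only [δ]; field_simp; ring
  have hinv : ∀ t : ℝ, 0 ≤ t → 1 - t ≤ (1 + t)⁻¹ := fun t ht => by
    rw [← sub_nonneg, show (1 + t)⁻¹ - (1 - t) = t ^ 2 / (1 + t) by field_simp; ring]
    positivity
  exact ⟨δ, hδ, by linarith [hinv δ hδ.le], by linarith [hinv ε hε.le]⟩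

theorem Submodule.ClosedComplemented.exists_extension_near {𝕜 F X : Type*}
    [NontriviallyNormedField 𝕜] [NormedAddCommGroup F] [NormedSpace 𝕜 F]
    [NormedAddCommGroup X] [NormedSpace 𝕜 X] {E : Submodule 𝕜 F} (hE : E.ClosedComplemented) :
    ∃ C, 0 ≤ C ∧ ∀ (f : E →L[𝕜] X) (g₁ : F →L[𝕜] X), ∃ g : F →L[𝕜] X, (∀ x : E, g x = f x) ∧
      ∀ y, ‖(g - g₁) y‖ ≤ ‖g₁.comp E.subtypeL - f‖ * C * ‖y‖ := by
  obtain ⟨P, hP⟩ := hE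
  refine ⟨‖P‖, norm_nonneg P, fun f g₁ =>
    ⟨g₁ + (f - g₁.comp E.subtypeL).comp P, fun x => ?_, fun y => ?_⟩⟩
  · simp [hP]
  · calc ‖(g₁ + (f - g₁.comp E.subtypeL).comp P - g₁) y‖
        = ‖(f - g₁.comp E.subtypeL) (P y)‖ := by rw [add_sub_cancel_left]; rfl
      _ ≤ ‖f - g₁.comp E.subtypeL‖ * (‖P‖ * ‖y‖) :=
        (ContinuousLinearMap.le_opNorm _ _).trans (by gcongr; exact P.le_opNorm y)
      _ = ‖g₁.comp E.subtypeL - f‖ * ‖P‖ * ‖y‖ := by rw [norm_sub_rev, mul_assoc]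

theorem isGurarii_of_approx {X : Type*} [NormedAddCommGroup X] [NormedSpace ℝ X]
    (h : ∀ ε : ℝ, 0 < ε → ∀ (F : Type u) [NormedAddCommGroup F] [NormedSpace ℝ F]
      [FiniteDimensional ℝ F] (E : Subspace ℝ F) (f : E →L[ℝ] X),
      (∀ x : E, x ≠ 0 → (1 + ε)⁻¹ * ‖x‖ < ‖f x‖ ∧ ‖f x‖ < (1 + ε) * ‖x‖) →
      ∃ g : F →L[ℝ] X, IsAlmostIsometry (1 + ε) g ∧ ‖g.comp E.subtypeL - f‖ ≤ ε) :
    IsGurarii.{u} X := by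
  intro F _ _ _ E f ε hε
  obtain ⟨C, hC, hcorrect⟩ :=
    (Submodule.ClosedComplemented.of_finiteDimensional E).exists_extension_near (X := X)
  obtain ⟨δ, hδ, hlo, hhi⟩ := exists_pos_perturbation_bounds hε hC
  have hf : ∀ x : E, x ≠ 0 → (1 + δ)⁻¹ * ‖x‖ < ‖f x‖ ∧ ‖f x‖ < (1 + δ) * ‖x‖ := fun x hx => by
    have hx₀ : 0 < ‖x‖ := norm_pos_iff.2 hx
    rw [f.norm_map]
    exact ⟨mul_lt_of_lt_one_left hx₀ (inv_lt_one_of_one_lt₀ (by linarith)),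
      lt_mul_of_one_lt_left hx₀ (by linarith)⟩
  obtain ⟨g₁, hg₁, hg₁f⟩ := h δ hδ F E f.toContinuousLinearMap hf
  obtain ⟨g, hgf, hgg₁⟩ := hcorrect f.toContinuousLinearMap g₁
  have hnear : ∀ y, ‖(g - g₁) y‖ ≤ δ * C * ‖y‖ := fun y =>
    (hgg₁ y).trans (by gcongr)
  exact ⟨g, hgf, show IsAlmostIsometry (1 + ε) g by simpa using hg₁.add hnear hlo hhi⟩

theorem isGurarii_iff_approx_general
    {X : Type u} [NormedAddCommGroup X] [NormedSpace ℝ X] :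
    IsGurarii.{u} X ↔
      ∀ (ε : ℝ), 0 < ε →
        ∀ (F₀ : Type u) [NormedAddCommGroup F₀] [NormedSpace ℝ F₀]
          [FiniteDimensional ℝ F₀],
          ∀ (E₀ : Subspace ℝ F₀) (f : E₀ →L[ℝ] X),
            (∀ x : E₀, x ≠ 0 →
              (1 + ε)⁻¹ * ‖x‖ < ‖f x‖ ∧ ‖f x‖ < (1 + ε) * ‖x‖) →
            ∃ g : F₀ →L[ℝ] X,
              (∀ x : F₀, (1 + ε)⁻¹ * ‖x‖ ≤ ‖g x‖ ∧ ‖g x‖ ≤ (1 + ε) * ‖x‖) ∧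
              ‖g.comp E₀.subtypeL - f‖ ≤ ε := by
  refine ⟨fun hX ε hε F₀ _ _ _ E₀ f hf => ?_, isGurarii_of_approx⟩
  obtain ⟨K, hK, hKε, hfK⟩ := exists_isAlmostIsometry_of_strict f (by linarith) hf
  obtain ⟨g, hgf, hg⟩ := hX.exists_extension (f := (f : E₀ →ₗ[ℝ] X)) hK hKε hfK
  have hrestrict : g.comp E₀.subtypeL = f := ContinuousLinearMap.ext hgf
  exact ⟨g, hg, by simpa [hrestrict, ContinuousLinearMap.opNorm_zero] using hε.le⟩

/-- **A perturbation criterion for being Gurarii.** A Banach space `X` is Gurarii if and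
only if for every `ε > 0`, every pair of finite-dimensional spaces `E ⊆ F` and every
strict `ε`-isometric embedding `f : E → X`, there is an `ε`-isometric embedding
`g : F → X` with `‖g|_E − f‖ ≤ ε`. -/
theorem isGurarii_iff_approx
    {X : Type u} [NormedAddCommGroup X] [NormedSpace ℝ X] [CompleteSpace X] :
    IsGurarii.{u} X ↔
      ∀ (ε : ℝ), 0 < ε →
        ∀ (F₀ : Type u) [NormedAddCommGroup F₀] [NormedSpace ℝ F₀]
          [FiniteDimensional ℝ F₀],
          ∀ (E₀ : Subspace ℝ F₀) (f : E₀ →L[ℝ] X),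
            (∀ x : E₀, x ≠ 0 →
              (1 + ε)⁻¹ * ‖x‖ < ‖f x‖ ∧ ‖f x‖ < (1 + ε) * ‖x‖) →
            ∃ g : F₀ →L[ℝ] X,
              (∀ x : F₀, (1 + ε)⁻¹ * ‖x‖ ≤ ‖g x‖ ∧ ‖g x‖ ≤ (1 + ε) * ‖x‖) ∧
              ‖g.comp E₀.subtypeL - f‖ ≤ ε :=
  isGurarii_iff_approx_general
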